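/- Let L be a geometric lattice of finite height and let B be a set of atoms of L. Let ℒ(B) be the subposet {⋁_L F : F a finite subset of B} of L. Then the rank (height) of the geometric lattice ℒ(B) equals r_L(⋁_L B), the rank in L of the join of B, and the inclusion map ℒ(B) → L is order-preserving and cover-preserving: if x ⋖ y in ℒ(B), then x ⋖ y in L. -/
import Mathlib


universe u

/-- An element of a poset is an *atom* (point) if it is an upper cover of a least element. -/
def IsAtomP {P : Type*} [PartialOrder P] (a : P) : Prop :=
  ∃ z : P, (∀ w, z ≤ w) ∧ z ⋖ a

/-- An element of a poset is a *coatom* (hyperplane) if it is a lower cover of a greatest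
element. -/
def IsCoatomP {P : Type*} [PartialOrder P] (a : P) : Prop :=
  ∃ z : P, (∀ w, w ≤ z) ∧ a ⋖ z

/-- A partial order is a *geometric lattice of finite height* if it is a lattice
(binary joins and meets exist), has no infinite chains, is semimodular, and every
element is a join (least upper bound) of a set of atoms. -/
def IsGeomLatFH (P : Type*) [PartialOrder P] : Prop :=
  (∀ x y : P, ∃ z, IsLUB {x, y} z) ∧
  (∀ x y : P, ∃ z, IsGLB {x, y} z) ∧
  (∀ c : Set P, IsChain (· ≤ ·) c → c.Finite) ∧
  (∀ a b c : P, a ⋖ b → a ⋖ c → b ≠ c → ∃ d, b ⋖ d ∧ c ⋖ d) ∧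
  (∀ x : P, ∃ S : Set P, (∀ a ∈ S, IsAtomP a) ∧ IsLUB S x)

/-- `r` is the rank (height) function of a graded bounded poset: `r ⊥ = 0` and `r`
increases by exactly one across covering pairs. -/
def IsRankFn {L : Type*} [PartialOrder L] [OrderBot L] (r : L → ℕ) : Prop :=
  r ⊥ = 0 ∧ ∀ x y : L, x ⋖ y → r y = r x + 1

/-- A *matching* of a lattice: an injection from atoms to coatoms (hyperplanes) such
that each atom lies below its image. -/
def HasMatching (L : Type*) [CompleteLattice L] : Prop :=
  ∃ f : {a : L // IsAtom a} → {h : L // IsCoatom h},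
    Function.Injective f ∧ ∀ a : {a : L // IsAtom a}, (a : L) ≤ ((f a : {h : L // IsCoatom h}) : L)

/-- `joinClosure B` is the subposet `ℒ(B)` of all joins of finite subsets of `B`. -/
def joinClosure {L : Type*} [CompleteLattice L] (B : Set L) : Set L :=
  {x | ∃ F : Finset L, ↑F ⊆ B ∧ x = sSup (↑F : Set L)}


section Helpers
variable {L : Type u} [CompleteLattice L]


variable {L : Type u} [CompleteLattice L]

lemma wf_lt_of_chainsFinite (hc : ∀ c : Set L, IsChain (· ≤ ·) c → c.Finite) :
    WellFounded ((· < ·) : L → L → Prop) := by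
  rw [RelEmbedding.wellFounded_iff_isEmpty]
  constructor
  intro f
  have hchain : IsChain (· ≤ ·) (Set.range fun n => f n) := by
    rintro a ⟨m, rfl⟩ b ⟨n, rfl⟩ _
    rcases lt_trichotomy m n with h | h | h
    · exact Or.inr (f.map_rel_iff.mpr h).le
    · exact Or.inl (h ▸ le_refl _)
    · exact Or.inl (f.map_rel_iff.mpr h).le
  exact Set.infinite_range_of_injective f.injective (hc _ hchain)

lemma wf_gt_of_chainsFinite (hc : ∀ c : Set L, IsChain (· ≤ ·) c → c.Finite) :
    WellFounded ((· > ·) : L → L → Prop) := by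
  rw [RelEmbedding.wellFounded_iff_isEmpty]
  constructor
  intro f
  have hchain : IsChain (· ≤ ·) (Set.range fun n => f n) := by
    rintro a ⟨m, rfl⟩ b ⟨n, rfl⟩ _
    rcases lt_trichotomy m n with h | h | h
    · exact Or.inl (f.map_rel_iff.mpr h).le
    · exact Or.inl (h ▸ le_refl _)
    · exact Or.inr (f.map_rel_iff.mpr h).le
  exact Set.infinite_range_of_injective f.injective (hc _ hchain)

lemma exists_covBy_of_lt (hc : ∀ c : Set L, IsChain (· ≤ ·) c → c.Finite)
    {x y : L} (h : x < y) : ∃ z, x ⋖ z ∧ z ≤ y := by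
  obtain ⟨z, ⟨hxz, hzy⟩, hmin⟩ :=
    (wf_lt_of_chainsFinite hc).has_min {z | x < z ∧ z ≤ y} ⟨y, h, le_refl _⟩
  refine ⟨z, ⟨hxz, fun w hxw hwz => ?_⟩, hzy⟩
  exact hmin w ⟨hxw, hwz.le.trans hzy⟩ hwz

lemma exists_lowerCov (hc : ∀ c : Set L, IsChain (· ≤ ·) c → c.Finite)
    {x : L} (h : (⊥ : L) < x) : ∃ z, z ⋖ x := by
  obtain ⟨z, hz, hmin⟩ :=
    (wf_gt_of_chainsFinite hc).has_min {z | z < x} ⟨⊥, h⟩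
  exact ⟨z, hz, fun w hzw hwx => hmin w hwx hzw⟩

lemma rank_strictMonoOn (hc : ∀ c : Set L, IsChain (· ≤ ·) c → c.Finite)
    {r : L → ℕ} (hr : ∀ x y : L, x ⋖ y → r y = r x + 1) :
    ∀ x y : L, x < y → r x < r y := by
  intro x
  induction x using (wf_gt_of_chainsFinite hc).induction with
  | _ x IH =>
    intro y hxy
    obtain ⟨z, hxz, hzy⟩ := exists_covBy_of_lt hc hxy
    have hz := hr x z hxz
    rcases eq_or_lt_of_le hzy with rfl | hlt
    · omega
    · have := IH z hxz.lt y hlt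
      omega

lemma rank_mono (hc : ∀ c : Set L, IsChain (· ≤ ·) c → c.Finite)
    {r : L → ℕ} (hr : ∀ x y : L, x ⋖ y → r y = r x + 1) :
    ∀ x y : L, x ≤ y → r x ≤ r y := by
  intro x y h
  rcases eq_or_lt_of_le h with rfl | h
  · exact le_refl _
  · exact (rank_strictMonoOn hc hr x y h).le

lemma covBy_sup_atom (hc : ∀ c : Set L, IsChain (· ≤ ·) c → c.Finite)
    (hex : ∀ a b c : L, a ⋖ b → a ⋖ c → b ≠ c → ∃ d, b ⋖ d ∧ c ⋖ d) :
    ∀ x b : L, IsAtom b → ¬ b ≤ x → x ⋖ x ⊔ b := by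
  intro x
  induction x using (wf_lt_of_chainsFinite hc).induction with
  | _ x IH =>
    intro b hb hbx
    rcases eq_or_lt_of_le (bot_le : (⊥ : L) ≤ x) with rfl | hx
    · simpa using hb.bot_covBy
    · obtain ⟨x', hx'⟩ := exists_lowerCov hc hx
      have hbx' : ¬ b ≤ x' := fun h => hbx (h.trans hx'.le)
      have hcov' : x' ⋖ x' ⊔ b := IH x' hx'.lt b hb hbx'
      have hne : x ≠ x' ⊔ b := by
        rintro rfl
        exact hbx le_sup_right
      obtain ⟨d, hxd, hsd⟩ := hex x' x (x' ⊔ b) hx' hcov' hne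
      have hsupd : x ⊔ b ≤ d := sup_le hxd.le ((le_sup_right.trans hsd.le))
      have hlt : x < x ⊔ b := left_lt_sup.mpr hbx
      rcases eq_or_lt_of_le hsupd with h | h
      · exact h ▸ hxd
      · exact absurd h (hxd.2 hlt).elim


lemma bot_mem_joinClosure (B : Set L) : (⊥ : L) ∈ joinClosure B :=
  ⟨∅, by simp, by simp⟩

lemma le_sSup_of_mem_joinClosure {B : Set L} {x : L} (hx : x ∈ joinClosure B) :
    x ≤ sSup B := by
  obtain ⟨F, hF, rfl⟩ := hx
  exact sSup_le_sSup hF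

lemma sup_atom_mem_joinClosure {B : Set L} {x b : L} (hx : x ∈ joinClosure B)
    (hb : b ∈ B) : x ⊔ b ∈ joinClosure B := by
  classical
  obtain ⟨F, hF, rfl⟩ := hx
  refine ⟨insert b F, ?_, ?_⟩
  · rw [Finset.coe_insert]
    exact Set.insert_subset hb hF
  · rw [Finset.coe_insert, sSup_insert, sup_comm]

lemma sSup_mem_joinClosure (hc : ∀ c : Set L, IsChain (· ≤ ·) c → c.Finite)
    (B : Set L) : sSup B ∈ joinClosure B := by
  obtain ⟨t, ht, hmin⟩ := (wf_gt_of_chainsFinite hc).has_min (joinClosure B)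
    ⟨⊥, bot_mem_joinClosure B⟩
  have htop : ∀ b ∈ B, b ≤ t := by
    intro b hb
    have hmem : t ⊔ b ∈ joinClosure B := sup_atom_mem_joinClosure ht hb
    have : ¬ t < t ⊔ b := fun h => hmin _ hmem h
    have : t ⊔ b = t :=
      ((eq_or_lt_of_le (le_sup_left : t ≤ t ⊔ b)).resolve_right this).symm
    calc b ≤ t ⊔ b := le_sup_right
    _ = t := this
  have : t = sSup B := le_antisymm (le_sSup_of_mem_joinClosure ht) (sSup_le htop)
  exact this ▸ ht

lemma exists_ltSeries_joinClosure (hc : ∀ c : Set L, IsChain (· ≤ ·) c → c.Finite)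
    (hex : ∀ a b c : L, a ⋖ b → a ⋖ c → b ≠ c → ∃ d, b ⋖ d ∧ c ⋖ d)
    {r : L → ℕ} (hr : ∀ x y : L, x ⋖ y → r y = r x + 1)
    {B : Set L} (hB : ∀ b ∈ B, IsAtom b) :
    ∀ n (x : ↥(joinClosure B)), r (sSup B) = r ↑x + n →
      ∃ p : LTSeries ↥(joinClosure B), p.length = n ∧ p.head = x := by
  intro n
  induction n with
  | zero => intro x _; exact ⟨RelSeries.singleton _ x, rfl, rfl⟩
  | succ n IH =>
    intro x hx
    have hle : (x : L) ≤ sSup B := le_sSup_of_mem_joinClosure x.2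
    have hlt : (x : L) < sSup B := by
      rcases eq_or_lt_of_le hle with h | h
      · rw [← h] at hx; omega
      · exact h
    have hbex : ∃ b ∈ B, ¬ b ≤ (x : L) := by
      by_contra h
      push_neg at h
      exact absurd (sSup_le h) hlt.not_ge
    obtain ⟨b, hbB, hbx⟩ := hbex
    have hcov : (x : L) ⋖ (x : L) ⊔ b := covBy_sup_atom hc hex _ b (hB b hbB) hbx
    have hymem : (x : L) ⊔ b ∈ joinClosure B := sup_atom_mem_joinClosure x.2 hbB
    have hry : r ((x : L) ⊔ b) = r ↑x + 1 := hr _ _ hcov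
    obtain ⟨p, hplen, hphead⟩ := IH ⟨(x : L) ⊔ b, hymem⟩ (by rw [hry]; omega)
    have hrel : x < p.head := by
      rw [hphead]
      exact Subtype.coe_lt_coe.mp hcov.lt
    exact ⟨p.cons x hrel, by rw [RelSeries.cons_length, hplen], rfl⟩

lemma length_le_rank (hc : ∀ c : Set L, IsChain (· ≤ ·) c → c.Finite)
    {r : L → ℕ} (hr : ∀ x y : L, x ⋖ y → r y = r x + 1)
    {B : Set L} (p : LTSeries ↥(joinClosure B)) : p.length ≤ r (sSup B) := by
  have key : ∀ i : ℕ, ∀ h : i < p.length + 1, i ≤ r ↑(p.toFun ⟨i, h⟩) := by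
    intro i
    induction i with
    | zero => intro h; exact Nat.zero_le _
    | succ i IHi =>
      intro h
      have hi : i < p.length + 1 := by omega
      have hstep : (p.toFun ⟨i, hi⟩ : L) < ↑(p.toFun ⟨i + 1, h⟩) := by
        exact Subtype.coe_lt_coe.mpr (p.strictMono (by exact Fin.mk_lt_mk.mpr (by omega)))
      have := rank_strictMonoOn hc hr _ _ hstep
      have := IHi hi
      omega
  have hlast : p.length ≤ r ↑(p.last) := key p.length (by omega)
  have hle : (↑(p.last) : L) ≤ sSup B := le_sSup_of_mem_joinClosure (p.last).2
  exact hlast.trans (rank_mono hc hr _ _ hle)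


end Helpers

/-- The rank (height) of the geometric lattice `ℒ(B)` is the rank in `L` of `⋁ B`, and
the inclusion `ℒ(B) → L` is order-preserving and cover-preserving. -/
theorem joinClosure_rank_and_covers {L : Type u} [CompleteLattice L]
    (hL : IsGeomLatFH L) (r : L → ℕ) (hr : IsRankFn r)
    (B : Set L) (hB : ∀ b ∈ B, IsAtom b) :
    Order.krullDim ↥(joinClosure B) = (r (sSup B) : ℕ∞) ∧
    (∀ x y : ↥(joinClosure B), x ≤ y → (x : L) ≤ (y : L)) ∧
    (∀ x y : ↥(joinClosure B), x ⋖ y → (x : L) ⋖ (y : L)) := by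
  obtain ⟨-, -, hc, hex, -⟩ := hL
  obtain ⟨hr0, hrc⟩ := hr
  refine ⟨?_, fun x y h => h, ?_⟩
  · have hne : Nonempty ↥(joinClosure B) := ⟨⟨⊥, bot_mem_joinClosure B⟩⟩
    rw [Order.krullDim_eq_iSup_length]
    have heq : (⨆ p : LTSeries ↥(joinClosure B), (p.length : ℕ∞)) = (r (sSup B) : ℕ∞) := by
      apply le_antisymm
      · exact iSup_le fun p => Nat.cast_le.mpr (length_le_rank hc hrc p)
      · obtain ⟨p, hplen, -⟩ := exists_ltSeries_joinClosure hc hex hrc hB (r (sSup B))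
          ⟨⊥, bot_mem_joinClosure B⟩
          (by change r (sSup B) = r (⊥ : L) + r (sSup B); rw [hr0, Nat.zero_add])
        calc (r (sSup B) : ℕ∞) = (p.length : ℕ∞) := by rw [hplen]
        _ ≤ _ := le_iSup (fun p : LTSeries ↥(joinClosure B) => (p.length : ℕ∞)) p
    rw [heq]
  · intro x y hxy
    obtain ⟨F, hF, hyF⟩ := y.2
    have hxy' : (x : L) < (y : L) := Subtype.coe_lt_coe.mpr hxy.lt
    have hbex : ∃ b ∈ (F : Set L), ¬ b ≤ (x : L) := by
      by_contra h
      push_neg at h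
      have : (y : L) ≤ (x : L) := by rw [hyF]; exact sSup_le h
      exact absurd this hxy'.not_ge
    obtain ⟨b, hbF, hbx⟩ := hbex
    have hbB : b ∈ B := hF hbF
    have hcov : (x : L) ⋖ (x : L) ⊔ b := covBy_sup_atom hc hex _ b (hB b hbB) hbx
    have hmem : (x : L) ⊔ b ∈ joinClosure B := sup_atom_mem_joinClosure x.2 hbB
    have hzy : (x : L) ⊔ b ≤ (y : L) := sup_le hxy'.le (by rw [hyF]; exact le_sSup hbF)
    have hEq : ((x : L) ⊔ b) = (y : L) := by
      rcases eq_or_lt_of_le hzy with h | h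
      · exact h
      · exfalso
        have h1 : x < (⟨(x : L) ⊔ b, hmem⟩ : ↥(joinClosure B)) :=
          Subtype.coe_lt_coe.mp hcov.lt
        have h2 : (⟨(x : L) ⊔ b, hmem⟩ : ↥(joinClosure B)) < y :=
          Subtype.coe_lt_coe.mp h
        exact hxy.2 h1 h2
    exact hEq ▸ hcov
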